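/- Let m ≥ 1, let ℓ : ZMod m → Fin k satisfy weak admissibility (for all i, j with ℓ(i) = ℓ(j), one of the two cyclic intervals of punctures between components i and j contains no mixed puncture), and fix a label c ∈ Fin k such that not every component has label c. Then at most two punctures i satisfy (ℓ(i) = c or ℓ(i+1) = c) and ℓ(i) ≠ ℓ(i+1). That is, at most two mixed punctures are incident to boundary components labeled c. -/

import Mathlib

/-!
Two mixed punctures `i ≠ j` whose left components carry the same label violate weak
admissibility: the interval `[i, j)` contains the mixed puncture `i` and `[j, i)` contains `j`.
Likewise for the right components, using the intervals `[i + 1, j + 1) ∋ j` and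
`[j + 1, i + 1) ∋ i`. So at most one mixed puncture leaves `c` and at most one enters `c`.
-/

/-- `t` lies in the cyclic interval `[i, j)` in `ZMod m`. -/
def cyclicBetween {m : ℕ} [NeZero m] (i j t : ZMod m) : Prop :=
  (t - i).val < (j - i).val

section CyclicBetween

variable {m : ℕ} [NeZero m] {i j : ZMod m}

lemma ZMod.val_sub_one_lt {x : ZMod m} (hx : x ≠ 0) : (x - 1).val < x.val := by
  have hm : m ≠ 1 := by
    rintro rfl
    exact hx (Subsingleton.elim _ _)
  have hone : (1 : ZMod m).val = 1 := ZMod.val_one'' hm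
  have hpos : 0 < x.val := ZMod.val_pos.mpr hx
  rw [ZMod.val_sub (by omega), hone]
  omega

lemma cyclicBetween_left (h : i ≠ j) : cyclicBetween i j i := by
  simpa [cyclicBetween, ZMod.val_pos, sub_eq_zero] using h.symm

lemma cyclicBetween_sub_one (h : i ≠ j) : cyclicBetween i j (j - 1) := by
  rw [cyclicBetween, sub_right_comm]
  exact ZMod.val_sub_one_lt (sub_ne_zero.mpr h.symm)

lemma cyclicBetween_add_one_add_one (h : i ≠ j) : cyclicBetween (i + 1) (j + 1) j := by
  have h' := cyclicBetween_sub_one (i := i + 1) (j := j + 1) (by simpa using h)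
  rwa [add_sub_cancel_right] at h'

end CyclicBetween

def WeaklyAdmissible {m : ℕ} [NeZero m] {α : Type*} (ℓ : ZMod m → α) : Prop :=
  ∀ i j : ZMod m, ℓ i = ℓ j →
    (∀ t, cyclicBetween i j t → ℓ t = ℓ (t + 1)) ∨
    (∀ t, cyclicBetween j i t → ℓ t = ℓ (t + 1))

namespace WeaklyAdmissible

variable {m : ℕ} [NeZero m] {α : Type*} {ℓ : ZMod m → α}

lemma eq_of_mixed_of_label_eq (hℓ : WeaklyAdmissible ℓ) {i j : ZMod m}
    (hi : ℓ i ≠ ℓ (i + 1)) (hj : ℓ j ≠ ℓ (j + 1)) (hij : ℓ i = ℓ j) : i = j := by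
  by_contra hne
  rcases hℓ i j hij with h | h
  · exact hi (h i (cyclicBetween_left hne))
  · exact hj (h j (cyclicBetween_left (Ne.symm hne)))

lemma eq_of_mixed_of_label_succ_eq (hℓ : WeaklyAdmissible ℓ) {i j : ZMod m}
    (hi : ℓ i ≠ ℓ (i + 1)) (hj : ℓ j ≠ ℓ (j + 1)) (hij : ℓ (i + 1) = ℓ (j + 1)) : i = j := by
  by_contra hne
  rcases hℓ (i + 1) (j + 1) hij with h | h
  · exact hj (h j (cyclicBetween_add_one_add_one hne))
  · exact hi (h i (cyclicBetween_add_one_add_one (Ne.symm hne)))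

lemma card_mixed_label_le_one [DecidableEq α] (hℓ : WeaklyAdmissible ℓ) (c : α) :
    (Finset.univ.filter fun i => ℓ i = c ∧ ℓ i ≠ ℓ (i + 1)).card ≤ 1 := by
  refine Finset.card_le_one.mpr fun i hi j hj => ?_
  simp only [Finset.mem_filter, Finset.mem_univ, true_and] at hi hj
  exact hℓ.eq_of_mixed_of_label_eq hi.2 hj.2 (hi.1.trans hj.1.symm)

lemma card_mixed_label_succ_le_one [DecidableEq α] (hℓ : WeaklyAdmissible ℓ) (c : α) :
    (Finset.univ.filter fun i => ℓ (i + 1) = c ∧ ℓ i ≠ ℓ (i + 1)).card ≤ 1 := by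
  refine Finset.card_le_one.mpr fun i hi j hj => ?_
  simp only [Finset.mem_filter, Finset.mem_univ, true_and] at hi hj
  exact hℓ.eq_of_mixed_of_label_succ_eq hi.2 hj.2 (hi.1.trans hj.1.symm)

end WeaklyAdmissible

theorem stmt5_general {m k : ℕ} [NeZero m] (ℓ : ZMod m → Fin k)
    (hadm : ∀ i j : ZMod m, ℓ i = ℓ j →
      (∀ t, cyclicBetween i j t → ℓ t = ℓ (t + 1)) ∨
      (∀ t, cyclicBetween j i t → ℓ t = ℓ (t + 1)))
    (c : Fin k) :
    (Finset.univ.filter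
      (fun i : ZMod m => (ℓ i = c ∨ ℓ (i + 1) = c) ∧ ℓ i ≠ ℓ (i + 1))).card ≤ 2 := by
  have hℓ : WeaklyAdmissible ℓ := hadm
  have hsplit : (Finset.univ.filter
      (fun i : ZMod m => (ℓ i = c ∨ ℓ (i + 1) = c) ∧ ℓ i ≠ ℓ (i + 1))) =
      (Finset.univ.filter fun i => ℓ i = c ∧ ℓ i ≠ ℓ (i + 1)) ∪
        (Finset.univ.filter fun i => ℓ (i + 1) = c ∧ ℓ i ≠ ℓ (i + 1)) := by
    rw [← Finset.filter_or]
    simp only [or_and_right]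
  rw [hsplit]
  calc _ ≤ _ := Finset.card_union_le _ _
    _ ≤ 1 + 1 := add_le_add (hℓ.card_mixed_label_le_one c) (hℓ.card_mixed_label_succ_le_one c)

/-- Under weak admissibility, for a label `c` not carried by all boundary
components, at most two mixed punctures are incident to components labeled `c`. -/
theorem stmt5 {m k : ℕ} [NeZero m] (ℓ : ZMod m → Fin k)
    (hadm : ∀ i j : ZMod m, ℓ i = ℓ j →
      (∀ t, cyclicBetween i j t → ℓ t = ℓ (t + 1)) ∨
      (∀ t, cyclicBetween j i t → ℓ t = ℓ (t + 1)))
    (c : Fin k) (hc : ∃ i : ZMod m, ℓ i ≠ c) :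
    (Finset.univ.filter
      (fun i : ZMod m => (ℓ i = c ∨ ℓ (i + 1) = c) ∧ ℓ i ≠ ℓ (i + 1))).card ≤ 2 :=
  stmt5_general ℓ hadm c
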